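/- arXiv:2103.01210 — 7 statements merged into one kernel-verified Lean document; each statement's English description precedes it below -/
import Mathlib

section
/- Let f : ℝ^p × X → ℝ be a model with sup over θ, x of (‖∇_θ f_θ(x)‖² + f_θ(x)²) ≤ C². Let ℓ be a loss with |ℓ''| ≤ M, and D a distribution on X × ℝ. Suppose θ₀ satisfies f_{θ₀}(x) = 0 for all x, and ‖∇_θ L_D(f_{θ₀})‖ ≥ τ where L_D(g) = E_{(x,y)∼D}[ℓ(g(x), y)]. Then there exists w ∈ ℝ^p with ‖w‖ ≤ τ/(M C²) such that the linear predictor h(x) = ⟨w, ∇_θ f_{θ₀}(x)⟩ satisfies L_D(h) ≤ L_D(0) − τ²/(2 M C²). -/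
open MeasureTheory

/-!
Write `G = ∫ ℓ'(0, y) ∇f_{θ₀}(x)` for the loss gradient at `θ₀`. Since `f_{θ₀} = 0`, the Taylor bound
on `ℓ` together with Cauchy–Schwarz `⟨w, ∇f_{θ₀}(x)⟩² ≤ C² ‖w‖²` gives
`L_D(h_w) ≤ L_D(0) + ⟨w, G⟩ + (M C² / 2) ‖w‖²`, a quadratic upper bound in `w`. Minimising it along
the direction `-G` with step `τ / (M C²)` and using `‖G‖ ≥ τ` yields the claimed decrease.
-/

section

variable {E : Type*} [NormedAddCommGroup E] [InnerProductSpace ℝ E]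

lemma exists_norm_eq_inner_add_sq_le {G : E} {τ a : ℝ} (hτ : 0 ≤ τ) (ha : 0 < a)
    (hG : τ ≤ ‖G‖) :
    ∃ w : E, ‖w‖ = τ / a ∧ inner ℝ w G + a / 2 * ‖w‖ ^ 2 ≤ -(τ ^ 2 / (2 * a)) := by
  rcases eq_or_ne G 0 with rfl | hG0
  · obtain rfl : τ = 0 := le_antisymm (by simpa using hG) hτ
    exact ⟨0, by simp, by simp⟩
  have hGpos : 0 < ‖G‖ := norm_pos_iff.mpr hG0
  have hnorm : ‖-(τ / (a * ‖G‖)) • G‖ = τ / a := by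
    rw [norm_smul, norm_neg, Real.norm_eq_abs, abs_of_nonneg (by positivity)]
    field_simp
  have hinner : inner ℝ (-(τ / (a * ‖G‖)) • G) G = -(τ / a) * ‖G‖ := by
    rw [real_inner_smul_left, real_inner_self_eq_norm_sq]
    field_simp
  refine ⟨-(τ / (a * ‖G‖)) • G, hnorm, ?_⟩
  have hgain : τ / a * τ ≤ τ / a * ‖G‖ := mul_le_mul_of_nonneg_left hG (by positivity)
  calc _ = -(τ / a * ‖G‖) + τ ^ 2 / (2 * a) := by
          rw [hinner, hnorm]; field_simp
    _ ≤ -(τ / a * τ) + τ ^ 2 / (2 * a) := by linarith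
    _ = -(τ ^ 2 / (2 * a)) := by field_simp; ring

variable {ℓ ℓd : ℝ → ℝ → ℝ} {M C : ℝ}

lemma loss_inner_le_quadratic (htaylor : ∀ a y, ℓ a y ≤ ℓ 0 y + ℓd 0 y * a + M / 2 * a ^ 2)
    (hM : 0 ≤ M) {φ : E} (hφ : ‖φ‖ ≤ C) (w : E) (y : ℝ) :
    ℓ (inner ℝ w φ) y ≤ ℓ 0 y + inner ℝ w (ℓd 0 y • φ) + M * C ^ 2 / 2 * ‖w‖ ^ 2 := by
  have hsq : inner ℝ w φ ^ 2 ≤ C ^ 2 * ‖w‖ ^ 2 := by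
    calc inner ℝ w φ ^ 2 ≤ (‖w‖ * ‖φ‖) ^ 2 :=
          sq_le_sq.mpr ((abs_real_inner_le_norm w φ).trans (le_abs_self _))
      _ ≤ (‖w‖ * C) ^ 2 := by gcongr
      _ = C ^ 2 * ‖w‖ ^ 2 := by ring
  calc ℓ (inner ℝ w φ) y ≤ ℓ 0 y + ℓd 0 y * inner ℝ w φ + M / 2 * inner ℝ w φ ^ 2 := htaylor _ _
    _ ≤ ℓ 0 y + ℓd 0 y * inner ℝ w φ + M / 2 * (C ^ 2 * ‖w‖ ^ 2) := by gcongr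
    _ = ℓ 0 y + inner ℝ w (ℓd 0 y • φ) + M * C ^ 2 / 2 * ‖w‖ ^ 2 := by
      rw [real_inner_smul_right]; ring

variable [CompleteSpace E] {Ω : Type*} [MeasurableSpace Ω] {μ : Measure Ω} [IsProbabilityMeasure μ]

lemma integral_loss_inner_le_quadratic
    (htaylor : ∀ a y, ℓ a y ≤ ℓ 0 y + ℓd 0 y * a + M / 2 * a ^ 2) (hM : 0 ≤ M)
    {φ : Ω → E} {y : Ω → ℝ} (hφ : ∀ z, ‖φ z‖ ≤ C) (w : E)
    (hint0 : Integrable (fun z => ℓ 0 (y z)) μ)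
    (hintd : Integrable (fun z => ℓd 0 (y z) • φ z) μ)
    (hintw : Integrable (fun z => ℓ (inner ℝ w (φ z)) (y z)) μ) :
    ∫ z, ℓ (inner ℝ w (φ z)) (y z) ∂μ ≤
      (∫ z, ℓ 0 (y z) ∂μ) + inner ℝ w (∫ z, ℓd 0 (y z) • φ z ∂μ) + M * C ^ 2 / 2 * ‖w‖ ^ 2 := by
  have hint_lin : Integrable (fun z => inner ℝ w (ℓd 0 (y z) • φ z)) μ := hintd.const_inner w
  have hint_affine : Integrable (fun z => ℓ 0 (y z) + inner ℝ w (ℓd 0 (y z) • φ z)) μ :=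
    hint0.add hint_lin
  calc ∫ z, ℓ (inner ℝ w (φ z)) (y z) ∂μ
      ≤ ∫ z, (ℓ 0 (y z) + inner ℝ w (ℓd 0 (y z) • φ z) + M * C ^ 2 / 2 * ‖w‖ ^ 2) ∂μ :=
        integral_mono hintw (hint_affine.add (integrable_const _))
          fun z => loss_inner_le_quadratic htaylor hM (hφ z) w (y z)
    _ = _ := by
      rw [integral_add hint_affine (integrable_const _), integral_add hint0 hint_lin,
        integral_inner hintd, integral_const, probReal_univ, one_smul]

end

theorem stmt1_general {p : ℕ} {X : Type*} [MeasurableSpace X]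
    (f : EuclideanSpace ℝ (Fin p) → X → ℝ)
    (gradf : EuclideanSpace ℝ (Fin p) → X → EuclideanSpace ℝ (Fin p))
    (θ₀ : EuclideanSpace ℝ (Fin p))
    (C M τ : ℝ) (hC : 0 < C) (hM : 0 < M) (hτ : 0 < τ)
    (hbound : ∀ θ x, ‖gradf θ x‖ ^ 2 + (f θ x) ^ 2 ≤ C ^ 2)
    (ℓ ℓd : ℝ → ℝ → ℝ)
    (htaylor : ∀ a y, ℓ a y ≤ ℓ 0 y + ℓd 0 y * a + M / 2 * a ^ 2)
    (μ : Measure (X × ℝ)) [IsProbabilityMeasure μ]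
    (hunbiased : ∀ x, f θ₀ x = 0)
    (hint0 : Integrable (fun z : X × ℝ => ℓ 0 z.2) μ)
    (hintv : Integrable (fun z : X × ℝ => ℓd (f θ₀ z.1) z.2 • gradf θ₀ z.1) μ)
    (hintw : ∀ w : EuclideanSpace ℝ (Fin p),
      Integrable (fun z : X × ℝ => ℓ (inner ℝ w (gradf θ₀ z.1) : ℝ) z.2) μ)
    (hgradnorm : τ ≤ ‖∫ z : X × ℝ, ℓd (f θ₀ z.1) z.2 • gradf θ₀ z.1 ∂μ‖) :
    ∃ w : EuclideanSpace ℝ (Fin p), ‖w‖ ≤ τ / (M * C ^ 2) ∧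
      ∫ z : X × ℝ, ℓ (inner ℝ w (gradf θ₀ z.1) : ℝ) z.2 ∂μ ≤
        (∫ z : X × ℝ, ℓ 0 z.2 ∂μ) - τ ^ 2 / (2 * M * C ^ 2) := by
  simp only [hunbiased] at hintv hgradnorm
  have hgradC : ∀ x, ‖gradf θ₀ x‖ ≤ C := fun x =>
    (pow_le_pow_iff_left₀ (norm_nonneg _) hC.le two_ne_zero).mp
      (by linarith [hbound θ₀ x, sq_nonneg (f θ₀ x)])
  obtain ⟨w, hw_norm, hw_gain⟩ :=
    exists_norm_eq_inner_add_sq_le hτ.le (by positivity : 0 < M * C ^ 2) hgradnorm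
  refine ⟨w, hw_norm.le, ?_⟩
  have hquad := integral_loss_inner_le_quadratic (μ := μ) (φ := fun z => gradf θ₀ z.1)
    (y := Prod.snd) htaylor hM.le (fun z => hgradC z.1) w hint0 hintv (hintw w)
  rw [show 2 * M * C ^ 2 = 2 * (M * C ^ 2) by ring]
  linarith

/-- Theorem 3.1 (unbiased initialization): if gradient descent can move (the population-loss
gradient at an unbiased initialization has norm ≥ τ), then some bounded-norm predictor in the
tangent-kernel feature space beats the null predictor by `τ²/(2 M C²)`. -/
theorem stmt1 {p : ℕ} {X : Type*} [MeasurableSpace X]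
    (f : EuclideanSpace ℝ (Fin p) → X → ℝ)
    (gradf : EuclideanSpace ℝ (Fin p) → X → EuclideanSpace ℝ (Fin p))
    (θ₀ : EuclideanSpace ℝ (Fin p))
    (hgrad : ∀ x, HasGradientAt (fun θ => f θ x) (gradf θ₀ x) θ₀)
    (C M τ : ℝ) (hC : 0 < C) (hM : 0 < M) (hτ : 0 < τ)
    (hbound : ∀ θ x, ‖gradf θ x‖ ^ 2 + (f θ x) ^ 2 ≤ C ^ 2)
    (ℓ ℓd : ℝ → ℝ → ℝ) (hℓpos : ∀ a y, 0 ≤ ℓ a y)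
    (htaylor : ∀ a y, ℓ a y ≤ ℓ 0 y + ℓd 0 y * a + M / 2 * a ^ 2)
    (μ : Measure (X × ℝ)) [IsProbabilityMeasure μ]
    (hunbiased : ∀ x, f θ₀ x = 0)
    (hint0 : Integrable (fun z : X × ℝ => ℓ 0 z.2) μ)
    (hintv : Integrable (fun z : X × ℝ => ℓd (f θ₀ z.1) z.2 • gradf θ₀ z.1) μ)
    (hintw : ∀ w : EuclideanSpace ℝ (Fin p),
      Integrable (fun z : X × ℝ => ℓ (inner ℝ w (gradf θ₀ z.1) : ℝ) z.2) μ)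
    (hgradnorm : τ ≤ ‖∫ z : X × ℝ, ℓd (f θ₀ z.1) z.2 • gradf θ₀ z.1 ∂μ‖) :
    ∃ w : EuclideanSpace ℝ (Fin p), ‖w‖ ≤ τ / (M * C ^ 2) ∧
      ∫ z : X × ℝ, ℓ (inner ℝ w (gradf θ₀ z.1) : ℝ) z.2 ∂μ ≤
        (∫ z : X × ℝ, ℓ 0 z.2 ∂μ) - τ ^ 2 / (2 * M * C ^ 2) :=
  stmt1_general f gradf θ₀ C M τ hC hM hτ hbound ℓ ℓd htaylor μ hunbiased hint0 hintv hintw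
    hgradnorm
end

section
/- Let D be a distribution on {-1,1}^n × {-1,1} with square loss ℓ(ŷ,y) = (ŷ−y)²/2, where labels satisfy y = χ_I(x) = ∏_{i∈I} x_i with |I| = k ≥ 2, and the marginal on x is D_X = (1−α)·Unif({-1,1}^n) + α·D₁, where D₁ is the product distribution with E[x_i] = 1/2 for every i. Then every linear predictor h_w(x) = ⟨w, x⟩, w ∈ ℝ^n, satisfies L_D(h_w) ≥ 1/2 − α/2. -/
open Finset

/-- `±1` value of a Boolean bit. -/
noncomputable def sgn (b : Bool) : ℝ := if b then 1 else -1

/-- Parity (character) on the subset `I`. -/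
noncomputable def chi {n : ℕ} (I : Finset (Fin n)) (x : Fin n → Bool) : ℝ :=
  ∏ i ∈ I, sgn (x i)

/-- Uniform distribution on `{-1,1}^n`. -/
noncomputable def unif (n : ℕ) (_x : Fin n → Bool) : ℝ := 1 / 2 ^ n

/-- Product distribution with `E[x_i] = 1/2` (bit is `1` with probability `3/4`). -/
noncomputable def D1 (n : ℕ) (x : Fin n → Bool) : ℝ :=
  ∏ i : Fin n, (if x i then (3:ℝ)/4 else 1/4)

/-- Mixture input distribution of the biased-sparse-parities problem. -/
noncomputable def DX (n : ℕ) (α : ℝ) (x : Fin n → Bool) : ℝ :=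
  (1 - α) * unif n x + α * D1 n x

lemma sgn_sq (b : Bool) : sgn b ^ 2 = 1 := by cases b <;> simp [sgn]

lemma chi_sq {n : ℕ} (I : Finset (Fin n)) (x : Fin n → Bool) : chi I x ^ 2 = 1 := by
  unfold chi
  rw [← Finset.prod_pow]
  exact Finset.prod_eq_one fun i _ => sgn_sq (x i)

lemma chi_update {n : ℕ} (J : Finset (Fin n)) {j : Fin n} (hj : j ∈ J) (x : Fin n → Bool) :
    chi J (Function.update x j (!x j)) = - chi J x := by
  unfold chi
  rw [← Finset.mul_prod_erase J _ hj, ← Finset.mul_prod_erase J (fun i => sgn (x i)) hj]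
  have h1 : ∀ i ∈ J.erase j, sgn (Function.update x j (!x j) i) = sgn (x i) := by
    intro i hi
    rw [Function.update_of_ne (Finset.ne_of_mem_erase hi)]
  rw [Finset.prod_congr rfl h1, Function.update_self]
  cases x j <;> simp [sgn]

lemma sum_chi {n : ℕ} (J : Finset (Fin n)) (hJ : J.Nonempty) :
    ∑ x : Fin n → Bool, chi J x = 0 := by
  obtain ⟨j, hj⟩ := hJ
  apply Finset.sum_ninvolution (fun x => Function.update x j (!x j))
  · intro x
    rw [chi_update J hj]; ring
  · intro x _ h
    have := congrFun h j
    rw [Function.update_self] at this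
    exact (x j).not_ne_self this
  · intro x; exact Finset.mem_univ _
  · intro x
    funext i
    rcases eq_or_ne i j with rfl | hi
    · simp
    · simp [Function.update_of_ne hi]

lemma sum_sgn_chi {n k : ℕ} (I : Finset (Fin n)) (hI : I.card = k) (hk : 2 ≤ k) (i : Fin n) :
    ∑ x : Fin n → Bool, sgn (x i) * chi I x = 0 := by
  by_cases hi : i ∈ I
  · have h1 : ∀ x : Fin n → Bool, sgn (x i) * chi I x = chi (I.erase i) x := by
      intro x
      unfold chi
      rw [← Finset.mul_prod_erase I _ hi, ← mul_assoc]
      have : sgn (x i) * sgn (x i) = 1 := by cases x i <;> norm_num [sgn]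
      rw [this, one_mul]
    rw [Finset.sum_congr rfl fun x _ => h1 x]
    apply sum_chi
    rw [← Finset.card_pos, Finset.card_erase_of_mem hi, hI]
    omega
  · have h1 : ∀ x : Fin n → Bool, sgn (x i) * chi I x = chi (insert i I) x := by
      intro x
      unfold chi
      rw [Finset.prod_insert hi]
    rw [Finset.sum_congr rfl fun x _ => h1 x]
    exact sum_chi _ (Finset.insert_nonempty _ _)

lemma unif_bound {n k : ℕ} (I : Finset (Fin n)) (hI : I.card = k) (hk : 2 ≤ k)
    (w : Fin n → ℝ) :
    1 ≤ ∑ x : Fin n → Bool, unif n x * ((∑ i : Fin n, w i * sgn (x i)) - chi I x) ^ 2 := by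
  have card2 : (Finset.univ : Finset (Fin n → Bool)).card = 2 ^ n := by
    simp [Finset.card_univ]
  have hexp : ∀ x : Fin n → Bool,
      ((∑ i : Fin n, w i * sgn (x i)) - chi I x) ^ 2
        = (∑ i : Fin n, w i * sgn (x i)) ^ 2
          - 2 * (∑ i : Fin n, w i * (sgn (x i) * chi I x)) + 1 := by
    intro x
    have h1 : (∑ i : Fin n, w i * sgn (x i)) * chi I x
        = ∑ i : Fin n, w i * (sgn (x i) * chi I x) := by
      rw [Finset.sum_mul]
      exact Finset.sum_congr rfl fun i _ => by ring
    have h2 := chi_sq I x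
    nlinarith [h1, h2]
  have hsum : ∑ x : Fin n → Bool, ((∑ i : Fin n, w i * sgn (x i)) - chi I x) ^ 2
      = (∑ x : Fin n → Bool, (∑ i : Fin n, w i * sgn (x i)) ^ 2) + 2 ^ n := by
    rw [Finset.sum_congr rfl fun x _ => hexp x]
    rw [Finset.sum_add_distrib, Finset.sum_sub_distrib]
    have hcross : ∑ x : Fin n → Bool, 2 * (∑ i : Fin n, w i * (sgn (x i) * chi I x)) = 0 := by
      rw [← Finset.mul_sum, Finset.sum_comm]
      have : ∀ i : Fin n, ∑ x : Fin n → Bool, w i * (sgn (x i) * chi I x) = 0 := by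
        intro i
        rw [← Finset.mul_sum, sum_sgn_chi I hI hk i, mul_zero]
      rw [Finset.sum_congr rfl fun i _ => this i]
      simp
    rw [hcross, Finset.sum_const, card2]
    ring
  have hfin : ∑ x : Fin n → Bool, unif n x * ((∑ i : Fin n, w i * sgn (x i)) - chi I x) ^ 2
      = (1 / 2 ^ n) * ((∑ x : Fin n → Bool, (∑ i : Fin n, w i * sgn (x i)) ^ 2) + 2 ^ n) := by
    simp only [unif, ← Finset.mul_sum, hsum]
  rw [hfin]
  have hpos : (0:ℝ) < 2 ^ n := by positivity
  have hnn : 0 ≤ ∑ x : Fin n → Bool, (∑ i : Fin n, w i * sgn (x i)) ^ 2 :=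
    Finset.sum_nonneg fun x _ => sq_nonneg _
  rw [div_mul_eq_mul_div, one_mul, le_div_iff₀ hpos]
  linarith

/-- Claim 3.2 (lower bound part): every linear predictor has square loss at least `1/2 - α/2`
on the biased sparse parity distribution with a parity of `k ≥ 2` bits. -/
theorem stmt2 {n k : ℕ} (I : Finset (Fin n)) (hI : I.card = k) (hk : 2 ≤ k)
    (α : ℝ) (hα : 0 < α) (hα1 : α < 1) (w : Fin n → ℝ) :
    1/2 - α/2 ≤ ∑ x : Fin n → Bool, DX n α x *
      ((∑ i : Fin n, w i * sgn (x i)) - chi I x) ^ 2 / 2 := by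
  have hsplit : ∀ x : Fin n → Bool,
      DX n α x * ((∑ i : Fin n, w i * sgn (x i)) - chi I x) ^ 2 / 2
        = (1 - α) * (unif n x * ((∑ i : Fin n, w i * sgn (x i)) - chi I x) ^ 2) / 2
          + α * (D1 n x * ((∑ i : Fin n, w i * sgn (x i)) - chi I x) ^ 2) / 2 := by
    intro x; unfold DX; ring
  rw [Finset.sum_congr rfl fun x _ => hsplit x, Finset.sum_add_distrib]
  have h1 : (1 - α) / 2
      ≤ ∑ x : Fin n → Bool,
          (1 - α) * (unif n x * ((∑ i : Fin n, w i * sgn (x i)) - chi I x) ^ 2) / 2 := by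
    have := unif_bound I hI hk w
    calc (1 - α) / 2 = (1 - α) * 1 / 2 := by ring
      _ ≤ (1 - α) * (∑ x : Fin n → Bool,
            unif n x * ((∑ i : Fin n, w i * sgn (x i)) - chi I x) ^ 2) / 2 := by
          apply div_le_div_of_nonneg_right ?_ (by norm_num)
          exact mul_le_mul_of_nonneg_left this (by linarith)
      _ = _ := by rw [Finset.mul_sum, Finset.sum_div]
  have h2 : 0 ≤ ∑ x : Fin n → Bool,
      α * (D1 n x * ((∑ i : Fin n, w i * sgn (x i)) - chi I x) ^ 2) / 2 := by
    apply Finset.sum_nonneg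
    intro x _
    have hD1 : 0 ≤ D1 n x := by
      unfold D1
      apply Finset.prod_nonneg
      intro i _
      split <;> norm_num
    positivity
  linarith
end

section
/- With the same setup (sparse parity labels y = χ_I(x), |I| = k, mixture marginal D_X = (1−α)Unif + α·D₁ where D₁ has E[x_i] = 1/2), let Z = Σ_{i∈I} x_i. Then E[Z·y] = α·k/2^{k−1} and E[Z²] = k + α(k²−k)/4, and consequently the linear predictor h(x) = c·Z with c = E[Zy]/E[Z²] achieves square loss L_D(h) = 1/2 − γ with γ = E[Zy]²/(2 E[Z²]) ≥ (8/3)·α²/2^{2k}. -/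
open Finset

lemma sum_prod_bool {n : ℕ} (g : Fin n → Bool → ℝ) :
    ∑ x : Fin n → Bool, ∏ i, g i (x i) = ∏ i, (g i true + g i false) := by
  rw [← Fintype.prod_sum]
  exact Finset.prod_congr rfl fun i _ => by simp

lemma chi_full {n : ℕ} (J : Finset (Fin n)) (x : Fin n → Bool) :
    chi J x = ∏ i : Fin n, (if i ∈ J then sgn (x i) else 1) := by
  rw [Finset.prod_ite_mem, Finset.univ_inter, chi]

lemma sum_unif_chi {n : ℕ} (J : Finset (Fin n)) (hJ : J.Nonempty) :
    ∑ x : Fin n → Bool, unif n x * chi J x = 0 := by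
  have h : ∀ x : Fin n → Bool, unif n x * chi J x
      = ∏ i : Fin n, ((1/2 : ℝ) * (if i ∈ J then sgn (x i) else 1)) := by
    intro x
    rw [Finset.prod_mul_distrib, Finset.prod_const, ← chi_full]
    simp [unif, Finset.card_univ, div_pow]
  rw [Finset.sum_congr rfl (fun x _ => h x),
    sum_prod_bool (fun i b => (1/2 : ℝ) * (if i ∈ J then sgn b else 1))]
  obtain ⟨j, hj⟩ := hJ
  refine Finset.prod_eq_zero (Finset.mem_univ j) ?_
  simp [hj, sgn]

lemma sum_D1_chi {n : ℕ} (J : Finset (Fin n)) :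
    ∑ x : Fin n → Bool, D1 n x * chi J x = (1/2 : ℝ) ^ J.card := by
  have h : ∀ x : Fin n → Bool, D1 n x * chi J x
      = ∏ i : Fin n, ((if x i then (3:ℝ)/4 else 1/4) * (if i ∈ J then sgn (x i) else 1)) := by
    intro x
    rw [Finset.prod_mul_distrib, ← chi_full, D1]
  rw [Finset.sum_congr rfl (fun x _ => h x),
    sum_prod_bool (fun i b => (if b then (3:ℝ)/4 else 1/4) * (if i ∈ J then sgn b else 1))]
  have : ∀ i : Fin n, ((if (true:Bool) then (3:ℝ)/4 else 1/4) * (if i ∈ J then sgn true else 1)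
      + (if (false:Bool) then (3:ℝ)/4 else 1/4) * (if i ∈ J then sgn false else 1))
      = if i ∈ J then (1/2:ℝ) else 1 := by
    intro i; by_cases hi : i ∈ J <;> simp [hi, sgn] <;> norm_num
  rw [Finset.prod_congr rfl (fun i _ => this i), Finset.prod_ite_mem, Finset.univ_inter,
    Finset.prod_const]

lemma sum_DX_chi {n : ℕ} (α : ℝ) (J : Finset (Fin n)) (hJ : J.Nonempty) :
    ∑ x : Fin n → Bool, DX n α x * chi J x = α * (1/2 : ℝ) ^ J.card := by
  simp only [DX, add_mul, mul_assoc]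
  rw [Finset.sum_add_distrib, ← Finset.mul_sum, ← Finset.mul_sum, sum_unif_chi J hJ,
    sum_D1_chi J]
  ring

lemma mass_unif {n : ℕ} : ∑ x : Fin n → Bool, unif n x = 1 := by
  simp only [unif]
  rw [Finset.sum_const, Finset.card_univ]
  simp [Fintype.card_fun]

lemma mass_D1 {n : ℕ} : ∑ x : Fin n → Bool, D1 n x = 1 := by
  have h := sum_D1_chi (n := n) ∅
  simpa [chi] using h

lemma mass_DX {n : ℕ} (α : ℝ) : ∑ x : Fin n → Bool, DX n α x = 1 := by
  simp only [DX]
  rw [Finset.sum_add_distrib, ← Finset.mul_sum, ← Finset.mul_sum, mass_unif, mass_D1]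
  ring

/-- Claim 3.2 (upper bound / edge part): with `Z = ∑_{i∈I} x_i`, we have
`E[Zy] = αk/2^{k-1}`, `E[Z²] = k + α(k²-k)/4`, the optimally-scaled predictor `c·Z`
achieves loss `1/2 - E[Zy]²/(2E[Z²])`, and this edge is at least `(8/3)·α²/2^{2k}`. -/
theorem stmt3 {n k : ℕ} (hkn : k ≤ n) (I : Finset (Fin n)) (hI : I.card = k)
    (hk : 2 ≤ k) (α : ℝ) (hα : 0 < α) (hα1 : α < 1) :
    let Z : (Fin n → Bool) → ℝ := fun x => ∑ i ∈ I, sgn (x i)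
    let EZy : ℝ := ∑ x : Fin n → Bool, DX n α x * (Z x * chi I x)
    let EZ2 : ℝ := ∑ x : Fin n → Bool, DX n α x * (Z x) ^ 2
    EZy = α * k / 2 ^ (k - 1) ∧
    EZ2 = k + α * ((k : ℝ) ^ 2 - k) / 4 ∧
    (∑ x : Fin n → Bool, DX n α x * ((EZy / EZ2) * Z x - chi I x) ^ 2 / 2
        = 1/2 - EZy ^ 2 / (2 * EZ2)) ∧
    (8/3) * α ^ 2 / 2 ^ (2 * k) ≤ EZy ^ 2 / (2 * EZ2) := by
  intro Z EZy EZ2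
  have hsgn2 : ∀ b : Bool, sgn b * sgn b = 1 := by intro b; cases b <;> simp [sgn]
  have hZx : ∀ x, Z x = ∑ i ∈ I, sgn (x i) := fun _ => rfl
  have e1 : EZy = ∑ x : Fin n → Bool, DX n α x * (Z x * chi I x) := rfl
  have e2 : EZ2 = ∑ x : Fin n → Bool, DX n α x * (Z x) ^ 2 := rfl
  -- EZy value
  have hZy : ∀ x, Z x * chi I x = ∑ i ∈ I, chi (I.erase i) x := by
    intro x
    rw [hZx, Finset.sum_mul]
    refine Finset.sum_congr rfl fun i hi => ?_
    have : chi I x = sgn (x i) * chi (I.erase i) x := by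
      rw [chi, ← Finset.mul_prod_erase I _ hi]; rfl
    rw [this, ← mul_assoc, hsgn2, one_mul]
  have h1 : EZy = α * k / 2 ^ (k - 1) := by
    rw [e1]
    calc ∑ x : Fin n → Bool, DX n α x * (Z x * chi I x)
        = ∑ x : Fin n → Bool, ∑ i ∈ I, DX n α x * chi (I.erase i) x := by
          refine Finset.sum_congr rfl fun x _ => ?_
          rw [hZy x, Finset.mul_sum]
      _ = ∑ i ∈ I, ∑ x : Fin n → Bool, DX n α x * chi (I.erase i) x := Finset.sum_comm
      _ = ∑ i ∈ I, α * (1/2 : ℝ) ^ (k - 1) := by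
          refine Finset.sum_congr rfl fun i hi => ?_
          have hne : (I.erase i).Nonempty := by
            rw [← Finset.card_pos, Finset.card_erase_of_mem hi, hI]; omega
          rw [sum_DX_chi α _ hne, Finset.card_erase_of_mem hi, hI]
      _ = α * k / 2 ^ (k - 1) := by
          rw [Finset.sum_const, hI, nsmul_eq_mul]
          rw [div_pow, one_pow]
          ring
  -- EZ2 value
  have hinner : ∀ i ∈ I, ∀ j ∈ I,
      (∑ x : Fin n → Bool, DX n α x * (sgn (x i) * sgn (x j)))
        = if i = j then (1:ℝ) else α / 4 := by
    intro i _ j _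
    by_cases hij : i = j
    · subst hij
      rw [if_pos rfl]
      simp only [hsgn2, mul_one]
      exact mass_DX α
    · rw [if_neg hij]
      have hc : ∀ x : Fin n → Bool, sgn (x i) * sgn (x j) = chi ({i, j} : Finset (Fin n)) x := by
        intro x; rw [chi, Finset.prod_pair hij]
      simp_rw [hc]
      rw [sum_DX_chi α _ ⟨i, Finset.mem_insert_self i {j}⟩, Finset.card_pair hij]
      ring
  have h2 : EZ2 = k + α * ((k : ℝ) ^ 2 - k) / 4 := by
    rw [e2]
    calc ∑ x : Fin n → Bool, DX n α x * (Z x) ^ 2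
        = ∑ x : Fin n → Bool, ∑ i ∈ I, ∑ j ∈ I, DX n α x * (sgn (x i) * sgn (x j)) := by
          refine Finset.sum_congr rfl fun x _ => ?_
          rw [hZx, sq, Finset.sum_mul_sum, Finset.mul_sum]
          exact Finset.sum_congr rfl fun i _ => by rw [Finset.mul_sum]
      _ = ∑ i ∈ I, ∑ j ∈ I, ∑ x : Fin n → Bool, DX n α x * (sgn (x i) * sgn (x j)) := by
          rw [Finset.sum_comm]
          exact Finset.sum_congr rfl fun i _ => Finset.sum_comm
      _ = ∑ i ∈ I, ∑ j ∈ I, if i = j then (1:ℝ) else α / 4 := by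
          refine Finset.sum_congr rfl fun i hi => Finset.sum_congr rfl fun j hj => ?_
          exact hinner i hi j hj
      _ = ∑ i ∈ I, ((k : ℝ) * (α/4) + (1 - α/4)) := by
          refine Finset.sum_congr rfl fun i hi => ?_
          have hsplit : ∀ j, (if i = j then (1:ℝ) else α/4)
              = α/4 + (if i = j then 1 - α/4 else 0) := by
            intro j; split <;> ring
          simp_rw [hsplit]
          rw [Finset.sum_add_distrib, Finset.sum_const, hI, Finset.sum_ite_eq I i, if_pos hi,
            nsmul_eq_mul]
      _ = k + α * ((k : ℝ) ^ 2 - k) / 4 := by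
          rw [Finset.sum_const, hI, nsmul_eq_mul]; ring
  have hk2 : (2:ℝ) ≤ (k:ℝ) := by exact_mod_cast hk
  have hE2pos : (0:ℝ) < EZ2 := by
    rw [h2]; nlinarith [hα.le, hα1.le]
  -- loss identity
  have hchi2 : ∀ x, chi I x ^ 2 = 1 := by
    intro x
    rw [chi, ← Finset.prod_pow]
    exact Finset.prod_eq_one fun i _ => by cases x i <;> simp [sgn]
  have hloss : ∀ c : ℝ, ∑ x : Fin n → Bool, DX n α x * (c * Z x - chi I x) ^ 2 / 2
      = c ^ 2 / 2 * EZ2 - c * EZy + 1/2 := by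
    intro c
    calc ∑ x : Fin n → Bool, DX n α x * (c * Z x - chi I x) ^ 2 / 2
        = ∑ x : Fin n → Bool, (c ^ 2 / 2 * (DX n α x * (Z x) ^ 2)
            - c * (DX n α x * (Z x * chi I x)) + 1/2 * DX n α x) := by
          refine Finset.sum_congr rfl fun x _ => ?_
          linear_combination (DX n α x / 2) * hchi2 x
      _ = c ^ 2 / 2 * EZ2 - c * EZy + 1/2 := by
          rw [Finset.sum_add_distrib, Finset.sum_sub_distrib, ← Finset.mul_sum, ← Finset.mul_sum,
            ← Finset.mul_sum, mass_DX, ← e1, ← e2, mul_one]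
  refine ⟨h1, h2, ?_, ?_⟩
  · rw [hloss (EZy / EZ2)]
    field_simp
    ring
  · rw [h1, h2]
    have hp0 : (0:ℝ) < 2 ^ (k - 1) := by positivity
    have hpow : (2:ℝ) ^ (2 * k) = ((2:ℝ) ^ (k - 1)) ^ 2 * 4 := by
      rw [← pow_mul, show (4:ℝ) = 2 ^ 2 by norm_num, ← pow_add]
      congr 1
      omega
    rw [hpow]
    set K := (k : ℝ) with hK
    set p := (2:ℝ) ^ (k - 1) with hp
    have hD : (0:ℝ) < 2 * (K + α * (K ^ 2 - K) / 4) := by nlinarith [hα.le, hα1.le]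
    rw [div_le_div_iff₀ (by positivity) hD]
    have hr : (α * K / p) ^ 2 * (p ^ 2 * 4) = 4 * α ^ 2 * K ^ 2 := by
      field_simp
    rw [hr]
    have hKK : (0:ℝ) ≤ K^2 - K := by nlinarith
    have key : 16 * K + 4 * α * (K^2 - K) ≤ 12 * K^2 := by
      nlinarith [mul_nonneg (sub_nonneg.mpr hα1.le) hKK,
        mul_nonneg (by linarith : (0:ℝ) ≤ K) (by linarith : (0:ℝ) ≤ 2*K - 3)]
    nlinarith [mul_nonneg (sq_nonneg α)
      (by linarith : (0:ℝ) ≤ 12 * K^2 - 16 * K - 4 * α * (K^2 - K))]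
end

section
/- Let φ : {-1,1}^n → ℝ^p be any feature map, and let F be a family of N distinct nonempty subsets I ⊆ [n]. Under the uniform distribution on {-1,1}^n with labels y = χ_I(x) and square loss ℓ(ŷ,y) = (ŷ−y)²/2, there exists I ∈ F such that every linear predictor h(x) = ⟨w, φ(x)⟩ (any w ∈ ℝ^p) satisfies L_{D_I}(h) ≥ 1/2 − p/(2N). -/
open Finset

/-! Rescaled by `2^(-n/2)`, the parities form an orthonormal family in `ℓ²({-1,1}^n)`, and the
loss of a predictor is half its squared distance to the label function. The linear predictors
over `φ` form a subspace `K` of dimension at most `p`. Bessel's inequality, applied to each vector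
of an orthonormal basis of `K`, shows that the squared norms of the projections of the `N`
parities onto `K` sum to at most `p`; so one parity has a projection of squared norm at most
`p/N`, and by Pythagoras every element of `K` is at squared distance at least `1 - p/N` from it. -/

open Module
open scoped InnerProductSpace

section Projection

variable {𝕜 E ι : Type*} [RCLike 𝕜] [NormedAddCommGroup E] [InnerProductSpace 𝕜 E]

theorem Submodule.norm_sq_starProjection_eq_sum (K : Submodule 𝕜 E) [FiniteDimensional 𝕜 K]
    (x : E) :
    ‖K.starProjection x‖ ^ 2 = ∑ j, ‖⟪(stdOrthonormalBasis 𝕜 K j : E), x⟫_𝕜‖ ^ 2 := by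
  rw [K.starProjection_apply, K.norm_coe,
    ← (stdOrthonormalBasis 𝕜 K).sum_sq_norm_inner_right]
  simp only [inner_orthogonalProjectionOnto_eq_of_mem_left]

theorem Orthonormal.sum_norm_sq_starProjection_le_finrank {e : ι → E} (he : Orthonormal 𝕜 e)
    (s : Finset ι) (K : Submodule 𝕜 E) [FiniteDimensional 𝕜 K] :
    ∑ i ∈ s, ‖K.starProjection (e i)‖ ^ 2 ≤ finrank 𝕜 K := by
  set b := stdOrthonormalBasis 𝕜 K
  calc ∑ i ∈ s, ‖K.starProjection (e i)‖ ^ 2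
      = ∑ j, ∑ i ∈ s, ‖⟪e i, (b j : E)⟫_𝕜‖ ^ 2 := by
        simp only [K.norm_sq_starProjection_eq_sum]
        exact sum_comm.trans
          (sum_congr rfl fun j _ => sum_congr rfl fun i _ => by rw [norm_inner_symm])
    _ ≤ ∑ j, ‖(b j : E)‖ ^ 2 := sum_le_sum fun j _ => he.sum_inner_products_le _
    _ = finrank 𝕜 K := by simp [K.norm_coe, b.orthonormal.1]

theorem Submodule.norm_sq_sub_norm_sq_starProjection_le (K : Submodule 𝕜 E)
    [K.HasOrthogonalProjection] (v : E) {u : E} (hu : u ∈ K) :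
    ‖v‖ ^ 2 - ‖K.starProjection v‖ ^ 2 ≤ ‖u - v‖ ^ 2 := by
  have hpyth : ‖v‖ ^ 2 = ‖K.starProjection v‖ ^ 2 + ‖v - K.starProjection v‖ ^ 2 := by
    simpa [starProjection_orthogonal'] using K.norm_sq_eq_add_norm_sq_starProjection v
  have hmin : ‖v - K.starProjection v‖ ≤ ‖v - u‖ := by
    rw [starProjection_minimal]
    exact ciInf_le ⟨0, Set.forall_mem_range.2 fun _ => norm_nonneg _⟩ (⟨u, hu⟩ : K)
  rw [norm_sub_rev u]
  nlinarith [norm_nonneg (v - K.starProjection v)]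

theorem Orthonormal.exists_mem_forall_le_norm_sub_sq {e : ι → E} (he : Orthonormal 𝕜 e)
    {s : Finset ι} (hs : s.Nonempty) (K : Submodule 𝕜 E) [FiniteDimensional 𝕜 K] :
    ∃ i ∈ s, ∀ u ∈ K, 1 - (finrank 𝕜 K : ℝ) / #s ≤ ‖u - e i‖ ^ 2 := by
  have hcard : (0 : ℝ) < #s := by exact_mod_cast hs.card_pos
  obtain ⟨i, hi, hsmall⟩ : ∃ i ∈ s, ‖K.starProjection (e i)‖ ^ 2 ≤ (finrank 𝕜 K : ℝ) / #s := by
    refine exists_le_of_sum_le hs ?_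
    rw [sum_const, nsmul_eq_mul, mul_div_cancel₀ _ hcard.ne']
    exact he.sum_norm_sq_starProjection_le_finrank s K
  refine ⟨i, hi, fun u hu => ?_⟩
  have := K.norm_sq_sub_norm_sq_starProjection_le (e i) hu
  rw [he.1 i, one_pow] at this
  linarith

end Projection

lemma chi_mul_chi {n : ℕ} (I J : Finset (Fin n)) (x : Fin n → Bool) :
    chi I x * chi J x =
      ∏ i, (if i ∈ I then sgn (x i) else 1) * (if i ∈ J then sgn (x i) else 1) := by
  rw [prod_mul_distrib, Fintype.prod_ite_mem, Fintype.prod_ite_mem, chi, chi]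

lemma sum_chi_mul_chi {n : ℕ} (I J : Finset (Fin n)) :
    ∑ x : Fin n → Bool, chi I x * chi J x = if I = J then 2 ^ n else 0 := by
  have hcoord : ∀ i : Fin n,
      ∑ b : Bool, (if i ∈ I then sgn b else 1) * (if i ∈ J then sgn b else 1) =
        if i ∈ I ↔ i ∈ J then 2 else 0 := by
    intro i
    by_cases hI : i ∈ I <;> by_cases hJ : i ∈ J <;>
      norm_num [hI, hJ, sgn]
  -- the sum over the cube factors into one sum over `Bool` per coordinate
  simp_rw [chi_mul_chi]
  rw [← Fintype.prod_sum
    (fun i (b : Bool) => (if i ∈ I then sgn b else 1) * (if i ∈ J then sgn b else 1))]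
  simp only [hcoord, prod_ite_zero, mem_univ, true_implies, ← Finset.ext_iff, prod_const,
    card_univ, Fintype.card_fin]

noncomputable def toL2 (n : ℕ) : ((Fin n → Bool) → ℝ) →ₗ[ℝ] EuclideanSpace ℝ (Fin n → Bool) :=
  (√(2 ^ n))⁻¹ • (WithLp.linearEquiv 2 ℝ ((Fin n → Bool) → ℝ)).symm.toLinearMap

lemma inner_toL2 {n : ℕ} (f g : (Fin n → Bool) → ℝ) :
    ⟪toL2 n f, toL2 n g⟫_ℝ = ∑ x, unif n x * (f x * g x) := by
  simp only [toL2, LinearMap.smul_apply, LinearEquiv.coe_coe, PiLp.inner_apply, PiLp.smul_apply,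
    WithLp.coe_symm_linearEquiv, smul_eq_mul, RCLike.inner_apply, conj_trivial]
  refine sum_congr rfl fun x _ => ?_
  have hc : (√(2 ^ n))⁻¹ * (√(2 ^ n))⁻¹ = unif n x := by
    rw [← mul_inv, Real.mul_self_sqrt (by positivity), unif, one_div]
  rw [← hc]
  ring

lemma norm_toL2_sub_sq {n : ℕ} (f g : (Fin n → Bool) → ℝ) :
    ‖toL2 n f - toL2 n g‖ ^ 2 = ∑ x, unif n x * (f x - g x) ^ 2 := by
  rw [← map_sub, ← real_inner_self_eq_norm_sq, inner_toL2]
  simp only [Pi.sub_apply, sq]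

lemma orthonormal_toL2_chi (n : ℕ) : Orthonormal ℝ fun I : Finset (Fin n) => toL2 n (chi I) := by
  rw [orthonormal_iff_ite]
  intro I J
  simp only [inner_toL2, unif, ← mul_sum, sum_chi_mul_chi]
  split_ifs <;> simp

noncomputable def linearPredictor {X E : Type*} [NormedAddCommGroup E] [InnerProductSpace ℝ E]
    (φ : X → E) : E →ₗ[ℝ] X → ℝ :=
  LinearMap.pi fun x => (innerₗ E).flip (φ x)

lemma linearPredictor_apply {X E : Type*} [NormedAddCommGroup E] [InnerProductSpace ℝ E]
    (φ : X → E) (w : E) (x : X) : linearPredictor φ w x = ⟪w, φ x⟫_ℝ :=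
  rfl

theorem stmt6_general {n p N : ℕ} (hN : 0 < N)
    (φ : (Fin n → Bool) → EuclideanSpace ℝ (Fin p))
    (F : Finset (Finset (Fin n))) (hcard : F.card = N) :
    ∃ I ∈ F, ∀ w : EuclideanSpace ℝ (Fin p),
      (1:ℝ)/2 - (p : ℝ)/(2 * N) ≤
        ∑ x : Fin n → Bool, unif n x * ((inner ℝ w (φ x) : ℝ) - chi I x) ^ 2 / 2 := by
  set K := LinearMap.range (toL2 n ∘ₗ linearPredictor φ)
  have hK : (finrank ℝ K : ℝ) ≤ p := by
    exact_mod_cast (LinearMap.finrank_range_le _).trans_eq finrank_euclideanSpace_fin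
  obtain ⟨I, hI, hfar⟩ := (orthonormal_toL2_chi n).exists_mem_forall_le_norm_sub_sq
    (card_pos.mp (hcard ▸ hN)) K
  refine ⟨I, hI, fun w => ?_⟩
  have hw := hfar _ (LinearMap.mem_range_self _ w)
  simp only [LinearMap.comp_apply, norm_toL2_sub_sq, linearPredictor_apply, hcard] at hw
  calc (1 : ℝ) / 2 - p / (2 * N) = (1 - p / N) / 2 := by ring
    _ ≤ (1 - finrank ℝ K / N) / 2 := by gcongr
    _ ≤ _ := by rw [← sum_div]; gcongr

/-- Dimension-based kernel lower bound for parities: for any `p`-dimensional feature map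
and any family of `N` distinct nonempty parities, some parity resists all linear
predictors over the features, whose square loss is at least `1/2 - p/(2N)`. -/
theorem stmt6 {n p N : ℕ} (hN : 0 < N)
    (φ : (Fin n → Bool) → EuclideanSpace ℝ (Fin p))
    (F : Finset (Finset (Fin n))) (hcard : F.card = N)
    (hne : ∀ I ∈ F, I.Nonempty) :
    ∃ I ∈ F, ∀ w : EuclideanSpace ℝ (Fin p),
      (1:ℝ)/2 - (p : ℝ)/(2 * N) ≤
        ∑ x : Fin n → Bool, unif n x * ((inner ℝ w (φ x) : ℝ) - chi I x) ^ 2 / 2 :=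
  stmt6_general hN φ F hcard
end

section
/- Let P be a family of N distributions on X × ℝ with a common marginal D_X on X, such that the labeling functions {h_D}_{D∈P} (y = h_D(x)) are orthonormal in L²(D_X). For any feature map φ : X → ℝ^p and any B ≥ 0, if for every D ∈ P there is a predictor in the span of φ with square loss at most 1/2 − γ, then p ≥ 2γN. -/
/-!
Weighting by `√μ` embeds `L²(μ)` isometrically into `EuclideanSpace ℝ X`; the labels become an
orthonormal family `H i` and the linear predictors a subspace `S` of dimension at most `p`.
Edge `γ` on target `i` puts `H i` within squared distance `1 - 2γ` of `S`, so by Pythagoras its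
projection onto `S` has squared norm at least `2γ`. Expanding these projections in an orthonormal
basis `b` of `S` and applying Bessel's inequality to each `b k` shows that they sum to at most
`dim S ≤ p`.
-/

open Finset RealInnerProductSpace

namespace Submodule

section RCLike

variable {𝕜 E : Type*} [RCLike 𝕜] [NormedAddCommGroup E] [InnerProductSpace 𝕜 E]

theorem norm_sq_sub_norm_sq_sub_le_norm_sq_starProjection (K : Submodule 𝕜 E)
    [K.HasOrthogonalProjection] (v : E) {f : E} (hf : f ∈ K) :
    ‖v‖ ^ 2 - ‖v - f‖ ^ 2 ≤ ‖K.starProjection v‖ ^ 2 := by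
  have hmin : ‖v - K.starProjection v‖ ≤ ‖v - f‖ := by
    rw [starProjection_minimal]
    exact ciInf_le ⟨0, Set.forall_mem_range.2 fun _ => norm_nonneg _⟩ (⟨f, hf⟩ : K)
  have hpyth := K.norm_sq_eq_add_norm_sq_starProjection v
  rw [starProjection_orthogonal_val] at hpyth
  nlinarith [norm_nonneg (v - K.starProjection v)]

end RCLike

variable {E : Type*} [NormedAddCommGroup E] [InnerProductSpace ℝ E]

theorem norm_sq_starProjection_eq_sum_sq_inner (K : Submodule ℝ E) [K.HasOrthogonalProjection]
    {κ : Type*} [Fintype κ] (b : OrthonormalBasis κ ℝ K) (v : E) :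
    ‖K.starProjection v‖ ^ 2 = ∑ k, ⟪(b k : E), v⟫ ^ 2 := by
  rw [starProjection_apply, norm_coe, ← b.sum_sq_inner_right]
  simp

theorem sum_norm_sq_starProjection_le_finrank (K : Submodule ℝ E) [FiniteDimensional ℝ K]
    {ι : Type*} [Fintype ι] {H : ι → E} (hH : Orthonormal ℝ H) :
    ∑ i, ‖K.starProjection (H i)‖ ^ 2 ≤ Module.finrank ℝ K := by
  let b := stdOrthonormalBasis ℝ K
  calc ∑ i, ‖K.starProjection (H i)‖ ^ 2 = ∑ k, ∑ i, ⟪H i, b k⟫ ^ 2 := by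
        simp_rw [K.norm_sq_starProjection_eq_sum_sq_inner b, real_inner_comm]
        exact sum_comm
    _ ≤ ∑ k, ‖(b k : E)‖ ^ 2 := sum_le_sum fun k _ => by
        simpa using hH.sum_inner_products_le (s := univ) (b k : E)
    _ = Module.finrank ℝ K := by
        simp only [norm_coe, b.orthonormal.1 _]
        simp

end Submodule

theorem EuclideanSpace.fun_inner_eq_sum_smul {X ι : Type*} [Fintype ι]
    (φ : X → EuclideanSpace ℝ ι) (w : EuclideanSpace ℝ ι) :
    (fun x => ⟪w, φ x⟫) = ∑ k, w k • fun x => φ x k := by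
  ext x
  simp [PiLp.inner_apply, mul_comm]

section WeightedL2

variable {X : Type*} [Fintype X]

noncomputable def weightedL2 (μ : X → ℝ) : (X → ℝ) →ₗ[ℝ] EuclideanSpace ℝ X where
  toFun f := WithLp.toLp 2 fun x => √(μ x) * f x
  map_add' f g := by ext x; simp [mul_add]
  map_smul' c f := by ext x; simp; ring

theorem inner_weightedL2 {μ : X → ℝ} (hμ : ∀ x, 0 ≤ μ x) (f g : X → ℝ) :
    ⟪weightedL2 μ f, weightedL2 μ g⟫ = ∑ x, μ x * (f x * g x) := by
  simp only [weightedL2, LinearMap.coe_mk, AddHom.coe_mk, PiLp.inner_apply, RCLike.inner_apply,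
    conj_trivial]
  refine sum_congr rfl fun x _ => ?_
  linear_combination (f x * g x) * Real.mul_self_sqrt (hμ x)

theorem norm_sq_weightedL2 {μ : X → ℝ} (hμ : ∀ x, 0 ≤ μ x) (f : X → ℝ) :
    ‖weightedL2 μ f‖ ^ 2 = ∑ x, μ x * f x ^ 2 := by
  simp_rw [← real_inner_self_eq_norm_sq, inner_weightedL2 hμ, sq]

end WeightedL2

theorem stmt7_general {X : Type*} [Fintype X] {ι : Type*} [Fintype ι] [DecidableEq ι] {p : ℕ}
    (μ : X → ℝ) (hμ0 : ∀ x, 0 ≤ μ x)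
    (h : ι → X → ℝ)
    (horth : ∀ i j, (∑ x, μ x * (h i x * h j x)) = if i = j then (1:ℝ) else 0)
    (φ : X → EuclideanSpace ℝ (Fin p)) (γ : ℝ)
    (hlearn : ∀ i, ∃ w : EuclideanSpace ℝ (Fin p),
      ∑ x, μ x * ((inner ℝ w (φ x) : ℝ) - h i x) ^ 2 / 2 ≤ 1/2 - γ) :
    2 * γ * Fintype.card ι ≤ p := by
  set L := weightedL2 μ
  set S := Submodule.span ℝ (Set.range fun k => L fun x => φ x k)
  have hH : Orthonormal ℝ (L ∘ h) :=
    orthonormal_iff_ite.2 fun i j => (inner_weightedL2 hμ0 _ _).trans (horth i j)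
  have hedge : ∀ i, 2 * γ ≤ ‖S.starProjection (L (h i))‖ ^ 2 := by
    intro i
    obtain ⟨w, hw⟩ := hlearn i
    have hpred : L (fun x => ⟪w, φ x⟫) ∈ S := Submodule.mem_span_range_iff_exists_fun ℝ |>.2
      ⟨fun k => w k, by simp_rw [EuclideanSpace.fun_inner_eq_sum_smul, map_sum, map_smul]⟩
    have hloss : ‖L (h i) - L fun x => ⟪w, φ x⟫‖ ^ 2 = ∑ x, μ x * (⟪w, φ x⟫ - h i x) ^ 2 := by
      rw [norm_sub_rev, ← map_sub, norm_sq_weightedL2 hμ0]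
      rfl
    have hproj := S.norm_sq_sub_norm_sq_sub_le_norm_sq_starProjection (L (h i)) hpred
    rw [hloss, show ‖L (h i)‖ = 1 from hH.1 i] at hproj
    rw [← sum_div] at hw
    linarith
  calc 2 * γ * Fintype.card ι = ∑ i, 2 * γ := by simp [mul_comm]
    _ ≤ ∑ i, ‖S.starProjection (L (h i))‖ ^ 2 := sum_le_sum fun i _ => hedge i
    _ ≤ Module.finrank ℝ S := S.sum_norm_sq_starProjection_le_finrank hH
    _ ≤ p := by exact_mod_cast (finrank_range_le_card _).trans_eq (Fintype.card_fin p)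

/-- Abstract dimensional-complexity lower bound (Theorem C.1(i) of Kamath et al.):
if a `p`-dimensional feature map achieves square-loss edge `γ` on each of `N`
orthonormal labeling functions (over a common marginal), then `p ≥ 2γN`. -/
theorem stmt7 {X : Type*} [Fintype X] {ι : Type*} [Fintype ι] [DecidableEq ι] {p : ℕ}
    (μ : X → ℝ) (hμ0 : ∀ x, 0 ≤ μ x) (hμ1 : ∑ x, μ x = 1)
    (h : ι → X → ℝ)
    (horth : ∀ i j, (∑ x, μ x * (h i x * h j x)) = if i = j then (1:ℝ) else 0)
    (φ : X → EuclideanSpace ℝ (Fin p)) (γ : ℝ) (B : ℝ) (hB : 0 ≤ B)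
    (hlearn : ∀ i, ∃ w : EuclideanSpace ℝ (Fin p),
      ∑ x, μ x * ((inner ℝ w (φ x) : ℝ) - h i x) ^ 2 / 2 ≤ 1/2 - γ) :
    2 * γ * Fintype.card ι ≤ p :=
  stmt7_general μ hμ0 h horth φ γ hlearn
end

section
/- Let f_θ be a model on {-1,1}^n satisfying: f_θ(x) = ∏_{i : θ_i ≥ 3/n} x_i whenever θ ∈ ([−2/n, 2/n] ∪ [3/n, 5/n])^n with some θ_i ≥ 3/n, and f_0 ≡ 0 with ∇_θ f_0(x) = 2x. Let D be the biased sparse parities distribution D_I with parameters (n, k, α), τ = α/2^k and η = 2^k/(αn). Then for any g ∈ ℝ^n with ‖g − ∇_θ L_D(f_0)‖ ≤ τ, the point θ⁽¹⁾ = −η g satisfies θ⁽¹⁾_j ∈ [3/n, 5/n] for j ∈ I and θ⁽¹⁾_j ∈ [0, 2/n] for j ∉ I, and hence f_{θ⁽¹⁾}(x) = χ_I(x) for all x, so L_D(f_{θ⁽¹⁾}) = 0. -/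
/-
Since `y · 2x_j = 2 χ_{I △ {j}}`, each gradient coordinate at `θ = 0` is `-2 E_D[χ_S]` for
`S = I △ {j}`. Under the uniform part of `D` every nonempty parity has mean zero, while under
the biased part (`P[x_i = 1] = 3/4`, so `E[x_i] = 1/2`) it has mean `2^{-|S|}`. Hence the
gradient is `-4α/2^k` on `I` and `-α/2^k` off `I`; scaling by `-η = -1/(n τ)` puts the
`τ`-perturbed coordinates in `[3/n, 5/n]` on `I` and in `[0, 2/n]` off `I`, where the model
is the parity `χ_I`.
-/

open Finset

lemma sgn_mul_self (b : Bool) : sgn b * sgn b = 1 := by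
  cases b <;> norm_num [sgn]

lemma sum_prod_mul_prod_sgn {ι : Type*} [Fintype ι] [DecidableEq ι] (S : Finset ι)
    (p : ι → Bool → ℝ) :
    ∑ x : ι → Bool, (∏ i, p i (x i)) * ∏ i ∈ S, sgn (x i)
      = ∏ i, if i ∈ S then p i true - p i false else p i true + p i false := by
  have hcoord : ∀ i, (if i ∈ S then p i true - p i false else p i true + p i false)
      = ∑ b, p i b * if i ∈ S then sgn b else 1 := by
    intro i
    split_ifs <;> simp [sgn, sub_eq_add_neg]
  simp_rw [hcoord, Fintype.prod_sum, prod_mul_distrib, Fintype.prod_ite_mem]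

section Parity

variable {n : ℕ}

lemma unif_eq_prod (x : Fin n → Bool) : unif n x = ∏ _i : Fin n, (1 / 2 : ℝ) := by
  simp [unif]

lemma sum_unif_mul_chi {S : Finset (Fin n)} (hS : S.Nonempty) :
    ∑ x, unif n x * chi S x = 0 := by
  obtain ⟨i, hi⟩ := hS
  simp_rw [unif_eq_prod, chi, sum_prod_mul_prod_sgn S fun _ _ => (1 / 2 : ℝ)]
  exact prod_eq_zero (mem_univ i) (by simp [hi])

lemma sum_D1_mul_chi (S : Finset (Fin n)) : ∑ x, D1 n x * chi S x = (1 / 2 : ℝ) ^ S.card := by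
  simp_rw [D1, chi, sum_prod_mul_prod_sgn S fun _ b => if b then (3 / 4 : ℝ) else 1 / 4]
  norm_num [Fintype.prod_ite_mem]
  rw [one_div_pow, one_div]

lemma sum_DX_mul_chi (α : ℝ) {S : Finset (Fin n)} (hS : S.Nonempty) :
    ∑ x, DX n α x * chi S x = α * (1 / 2) ^ S.card := by
  simp_rw [DX, add_mul, sum_add_distrib, mul_assoc, ← mul_sum, sum_unif_mul_chi hS,
    sum_D1_mul_chi]
  ring

lemma chi_mul_sgn_of_mem {I : Finset (Fin n)} {j : Fin n} (hj : j ∈ I) (x : Fin n → Bool) :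
    chi I x * sgn (x j) = chi (I.erase j) x := by
  rw [chi, ← mul_prod_erase I _ hj, mul_comm, ← mul_assoc, sgn_mul_self, one_mul, chi]

lemma chi_mul_sgn_of_notMem {I : Finset (Fin n)} {j : Fin n} (hj : j ∉ I) (x : Fin n → Bool) :
    chi I x * sgn (x j) = chi (insert j I) x := by
  rw [chi, chi, prod_insert hj, mul_comm]

lemma sum_DX_mul_sqLoss_grad_of_mem (α : ℝ) {I : Finset (Fin n)} (hI : 2 ≤ I.card)
    {j : Fin n} (hj : j ∈ I) :
    ∑ x, DX n α x * ((0 - chi I x) * (2 * sgn (x j))) = -4 * (α / 2 ^ I.card) := by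
  have hne : (I.erase j).Nonempty := by
    rw [← card_pos, card_erase_of_mem hj]; omega
  obtain ⟨m, hm⟩ : ∃ m, I.card = m + 1 := ⟨I.card - 1, by omega⟩
  calc ∑ x, DX n α x * ((0 - chi I x) * (2 * sgn (x j)))
      = -2 * ∑ x, DX n α x * chi (I.erase j) x := by
        rw [mul_sum]
        refine sum_congr rfl fun x _ => ?_
        rw [← chi_mul_sgn_of_mem hj]
        ring
    _ = -4 * (α / 2 ^ I.card) := by
        rw [sum_DX_mul_chi α hne, card_erase_of_mem hj, hm, Nat.add_sub_cancel, pow_succ,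
          one_div_pow]
        field_simp
        ring

lemma sum_DX_mul_sqLoss_grad_of_notMem (α : ℝ) {I : Finset (Fin n)} {j : Fin n} (hj : j ∉ I) :
    ∑ x, DX n α x * ((0 - chi I x) * (2 * sgn (x j))) = -(α / 2 ^ I.card) := by
  calc ∑ x, DX n α x * ((0 - chi I x) * (2 * sgn (x j)))
      = -2 * ∑ x, DX n α x * chi (insert j I) x := by
        rw [mul_sum]
        refine sum_congr rfl fun x _ => ?_
        rw [← chi_mul_sgn_of_notMem hj]
        ring
    _ = -(α / 2 ^ I.card) := by
        rw [sum_DX_mul_chi α (insert_nonempty j I), card_insert_of_notMem hj, pow_succ,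
          one_div_pow]
        field_simp

end Parity

lemma neg_mul_mem_Icc_of_abs_add_le {η c g a : ℝ} (hη : 0 ≤ η) (h : |g + a * c| ≤ c) :
    -η * g ∈ Set.Icc (η * c * (a - 1)) (η * c * (a + 1)) := by
  obtain ⟨hlo, hhi⟩ := abs_le.mp h
  constructor <;> nlinarith

lemma model_eq_chi {n : ℕ} {I : Finset (Fin n)} (hI : I.Nonempty)
    {f : (Fin n → ℝ) → (Fin n → Bool) → ℝ}
    (hf : ∀ θ : Fin n → ℝ,
      (∀ i, θ i ∈ Set.Icc (-(2 / (n : ℝ))) (2 / (n : ℝ)) ∪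
            Set.Icc (3 / (n : ℝ)) (5 / (n : ℝ))) →
      (∃ i, 3 / (n : ℝ) ≤ θ i) →
      ∀ x, f θ x = ∏ i ∈ Finset.univ.filter (fun i => 3 / (n : ℝ) ≤ θ i), sgn (x i))
    {θ : Fin n → ℝ} (hθI : ∀ j ∈ I, θ j ∈ Set.Icc (3 / (n : ℝ)) (5 / (n : ℝ)))
    (hθ : ∀ j ∉ I, θ j ∈ Set.Icc (0 : ℝ) (2 / (n : ℝ))) (x : Fin n → Bool) :
    f θ x = chi I x := by
  obtain ⟨i₀, hi₀⟩ := hI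
  have hn : (0 : ℝ) < n := Nat.cast_pos.mpr i₀.pos
  have h23 : 2 / (n : ℝ) < 3 / n := div_lt_div_of_pos_right (by norm_num) hn
  have hfilter : univ.filter (fun i => 3 / (n : ℝ) ≤ θ i) = I := by
    ext i
    by_cases hi : i ∈ I
    · simp [hi, (hθI i hi).1]
    · simp [hi, (hθ i hi).2.trans_lt h23]
  have hrange :
      ∀ i, θ i ∈ Set.Icc (-(2 / (n : ℝ))) (2 / n) ∪ Set.Icc (3 / (n : ℝ)) (5 / n) := by
    intro i
    by_cases hi : i ∈ I
    · exact Or.inr (hθI i hi)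
    · exact Or.inl ⟨(neg_nonpos.mpr (by positivity)).trans (hθ i hi).1, (hθ i hi).2⟩
  rw [hf θ hrange ⟨i₀, (hθI i₀ hi₀).1⟩, hfilter, chi]

theorem stmt14_general {n k : ℕ} (I : Finset (Fin n)) (hI : I.card = k)
    (hk : 2 ≤ k) (α : ℝ) (hα : 0 < α)
    (f : (Fin n → ℝ) → (Fin n → Bool) → ℝ)
    (hf : ∀ θ : Fin n → ℝ,
      (∀ i, θ i ∈ Set.Icc (-(2 / (n : ℝ))) (2 / (n : ℝ)) ∪
            Set.Icc (3 / (n : ℝ)) (5 / (n : ℝ))) →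
      (∃ i, 3 / (n : ℝ) ≤ θ i) →
      ∀ x, f θ x = ∏ i ∈ Finset.univ.filter (fun i => 3 / (n : ℝ) ≤ θ i), sgn (x i))
    (τ η : ℝ) (hτ : τ = α / 2 ^ k) (hη : η = 2 ^ k / (α * n))
    (gradL : EuclideanSpace ℝ (Fin n))
    (hgradL : ∀ j, gradL j =
      ∑ x : Fin n → Bool, DX n α x * ((0 - chi I x) * (2 * sgn (x j))))
    (g : EuclideanSpace ℝ (Fin n)) (hg : ‖g - gradL‖ ≤ τ) :
    (∀ j ∈ I, -η * g j ∈ Set.Icc (3 / (n : ℝ)) (5 / (n : ℝ))) ∧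
    (∀ j ∉ I, -η * g j ∈ Set.Icc (0 : ℝ) (2 / (n : ℝ))) ∧
    (∀ x, f (fun j => -η * g j) x = chi I x) ∧
    ∑ x : Fin n → Bool, DX n α x * (f (fun j => -η * g j) x - chi I x) ^ 2 / 2 = 0 := by
  subst hI hτ
  obtain ⟨i₀, hi₀⟩ : I.Nonempty := card_pos.mp (by omega)
  have hn : (0 : ℝ) < n := Nat.cast_pos.mpr i₀.pos
  have hηc : η * (α / 2 ^ I.card) = 1 / n := by rw [hη]; field_simp
  have hclose : ∀ j, |g j - gradL j| ≤ α / 2 ^ I.card := fun j =>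
    (PiLp.norm_apply_le (g - gradL) j).trans hg
  have hη0 : 0 ≤ η := hη ▸ by positivity
  have hcoord_mem : ∀ j ∈ I, -η * g j ∈ Set.Icc (3 / (n : ℝ)) (5 / n) := fun j hj => by
    have h := neg_mul_mem_Icc_of_abs_add_le (g := g j) (a := 4) (c := α / 2 ^ I.card) hη0 <| by
      convert hclose j using 2
      rw [hgradL, sum_DX_mul_sqLoss_grad_of_mem α hk hj]
      ring
    rw [hηc] at h
    convert h using 2 <;> ring
  have hcoord_notMem : ∀ j ∉ I, -η * g j ∈ Set.Icc (0 : ℝ) (2 / n) := fun j hj => by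
    have h := neg_mul_mem_Icc_of_abs_add_le (g := g j) (a := 1) (c := α / 2 ^ I.card) hη0 <| by
      convert hclose j using 2
      rw [hgradL, sum_DX_mul_sqLoss_grad_of_notMem α hj]
      ring
    rw [hηc] at h
    convert h using 2 <;> ring
  have hmodel := model_eq_chi ⟨i₀, hi₀⟩ hf hcoord_mem hcoord_notMem
  exact ⟨hcoord_mem, hcoord_notMem, hmodel, sum_eq_zero fun x _ => by rw [hmodel x]; ring⟩

/-- Claim 3.1: one step of `τ`-approximate gradient descent from `θ₀ = 0` (where the
population gradient of the square loss is `∇_θ L(f_0) j = E[(0 - y)·2 x_j]`) lands the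
coordinates in `I` in `[3/n, 5/n]` and the rest in `[0, 2/n]`, so the model outputs the
parity `χ_I` exactly and achieves zero population square loss. -/
theorem stmt14 {n k : ℕ} (hn : 2 ≤ n) (I : Finset (Fin n)) (hI : I.card = k)
    (hk : 2 ≤ k) (hkn : k ≤ n) (α : ℝ) (hα : 0 < α) (hα1 : α < 1)
    (f : (Fin n → ℝ) → (Fin n → Bool) → ℝ)
    (hf : ∀ θ : Fin n → ℝ,
      (∀ i, θ i ∈ Set.Icc (-(2 / (n : ℝ))) (2 / (n : ℝ)) ∪
            Set.Icc (3 / (n : ℝ)) (5 / (n : ℝ))) →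
      (∃ i, 3 / (n : ℝ) ≤ θ i) →
      ∀ x, f θ x = ∏ i ∈ Finset.univ.filter (fun i => 3 / (n : ℝ) ≤ θ i), sgn (x i))
    (τ η : ℝ) (hτ : τ = α / 2 ^ k) (hη : η = 2 ^ k / (α * n))
    (gradL : EuclideanSpace ℝ (Fin n))
    (hgradL : ∀ j, gradL j =
      ∑ x : Fin n → Bool, DX n α x * ((0 - chi I x) * (2 * sgn (x j))))
    (g : EuclideanSpace ℝ (Fin n)) (hg : ‖g - gradL‖ ≤ τ) :
    (∀ j ∈ I, -η * g j ∈ Set.Icc (3 / (n : ℝ)) (5 / (n : ℝ))) ∧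
    (∀ j ∉ I, -η * g j ∈ Set.Icc (0 : ℝ) (2 / (n : ℝ))) ∧
    (∀ x, f (fun j => -η * g j) x = chi I x) ∧
    ∑ x : Fin n → Bool, DX n α x * (f (fun j => -η * g j) x - chi I x) ^ 2 / 2 = 0 :=
  stmt14_general I hI hk α hα f hf τ η hτ hη gradL hgradL g hg
end

section
/- For the leaky parities distribution D_I = (1−α)D_I^(0) + α D_I^(1) (where D_I^(0): x uniform on {-1,1}^n, y = χ_I(x) with |I| ≥ 2; D_I^(1): x = x^I deterministically with x^I_i = 1 iff i ∈ I, y uniform on {-1,1}), every affine predictor h(x) = ⟨w,x⟩ + b satisfies E_{(x,y)∼D_I}[h(x)·y] = 0, and hence under square loss ℓ(ŷ,y) = (ŷ−y)²/2, every affine h satisfies L_{D_I}(h) ≥ 1/2. -/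
open Finset

/-- Expectation under the leaky parities distribution `D_I = (1-α)D_I⁽⁰⁾ + α D_I⁽¹⁾`:
on `D_I⁽⁰⁾`, `x` is uniform and `y = χ_I(x)`; on `D_I⁽¹⁾`, `x = x^I` (indicator of `I`)
and `y` is uniform on `{-1,1}`. -/
noncomputable def Elp (n : ℕ) (α : ℝ) (I : Finset (Fin n))
    (F : (Fin n → Bool) → ℝ → ℝ) : ℝ :=
  (1 - α) * ∑ x : Fin n → Bool, unif n x * F x (chi I x) +
  α * ((1/2) * F (fun i => decide (i ∈ I)) 1 + (1/2) * F (fun i => decide (i ∈ I)) (-1))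

lemma sum_chi_eq_zero {n : ℕ} {S : Finset (Fin n)} (hS : S.Nonempty) :
    ∑ x : Fin n → Bool, chi S x = 0 := by
  obtain ⟨i₀, hi₀⟩ := hS
  have hinv : Function.Involutive (fun x : Fin n → Bool => Function.update x i₀ (!x i₀)) := by
    intro x
    ext j
    by_cases h : j = i₀
    · subst h; simp
    · simp [Function.update_of_ne h]
  have hflip : ∀ x : Fin n → Bool, chi S (Function.update x i₀ (!x i₀)) = - chi S x := by
    intro x
    rw [chi, chi, ← Finset.mul_prod_erase S _ hi₀, ← Finset.mul_prod_erase S _ hi₀]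
    have hrest : ∀ i ∈ S.erase i₀,
        sgn (Function.update x i₀ (!x i₀) i) = sgn (x i) := by
      intro i hi
      rw [Function.update_of_ne (Finset.ne_of_mem_erase hi)]
    rw [Finset.prod_congr rfl hrest, Function.update_self]
    have : sgn (!x i₀) = - sgn (x i₀) := by cases x i₀ <;> simp [sgn]
    rw [this]; ring
  have h1 : ∑ x : Fin n → Bool, chi S x = - ∑ x : Fin n → Bool, chi S x := by
    conv_lhs => rw [← Equiv.sum_comp hinv.toPerm (chi S)]
    simp only [Function.Involutive.coe_toPerm]
    rw [Finset.sum_congr rfl (fun x _ => hflip x), Finset.sum_neg_distrib]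
  linarith

lemma sum_sgn_mul_chi {n : ℕ} {I : Finset (Fin n)} (hI : 2 ≤ I.card) (i : Fin n) :
    ∑ x : Fin n → Bool, sgn (x i) * chi I x = 0 := by
  by_cases hi : i ∈ I
  · have h : ∀ x : Fin n → Bool, sgn (x i) * chi I x = chi (I.erase i) x := by
      intro x
      rw [chi, ← Finset.mul_prod_erase I _ hi, ← mul_assoc]
      have : sgn (x i) * sgn (x i) = 1 := by cases x i <;> simp [sgn]
      rw [this, one_mul, chi]
    rw [Finset.sum_congr rfl (fun x _ => h x)]
    apply sum_chi_eq_zero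
    rw [← Finset.card_pos, Finset.card_erase_of_mem hi]
    omega
  · have h : ∀ x : Fin n → Bool, sgn (x i) * chi I x = chi (insert i I) x := by
      intro x
      rw [chi, chi]
      exact (Finset.prod_insert (f := fun j => sgn (x j)) hi).symm
    rw [Finset.sum_congr rfl (fun x _ => h x)]
    exact sum_chi_eq_zero (Finset.insert_nonempty _ _)

lemma sum_affine_mul_chi {n : ℕ} {I : Finset (Fin n)} (hI : 2 ≤ I.card)
    (w : Fin n → ℝ) (b : ℝ) :
    ∑ x : Fin n → Bool, ((∑ i : Fin n, w i * sgn (x i)) + b) * chi I x = 0 := by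
  have hne : I.Nonempty := Finset.card_pos.mp (by omega)
  have h : ∀ x : Fin n → Bool, ((∑ i : Fin n, w i * sgn (x i)) + b) * chi I x
      = (∑ i : Fin n, w i * (sgn (x i) * chi I x)) + b * chi I x := by
    intro x
    rw [add_mul, Finset.sum_mul]
    simp [mul_assoc]
  rw [Finset.sum_congr rfl (fun x _ => h x), Finset.sum_add_distrib, Finset.sum_comm]
  rw [← Finset.mul_sum, sum_chi_eq_zero hne, mul_zero, add_zero]
  apply Finset.sum_eq_zero
  intro i _
  rw [← Finset.mul_sum, sum_sgn_mul_chi hI i, mul_zero]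

/-- Claim 5.2: every affine predictor is uncorrelated with the labels of the leaky
parities distribution, and hence has square loss at least `1/2`. -/
theorem stmt15 {n : ℕ} (I : Finset (Fin n)) (hI : 2 ≤ I.card)
    (α : ℝ) (hα : 0 < α) (hα1 : α < 1) (w : Fin n → ℝ) (b : ℝ) :
    Elp n α I (fun x y => ((∑ i : Fin n, w i * sgn (x i)) + b) * y) = 0 ∧
    (1:ℝ)/2 ≤ Elp n α I (fun x y => (((∑ i : Fin n, w i * sgn (x i)) + b) - y) ^ 2 / 2) := by
  set h : (Fin n → Bool) → ℝ := fun x => (∑ i : Fin n, w i * sgn (x i)) + b with hh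
  have hsum : ∑ x : Fin n → Bool, unif n x * (h x * chi I x) = 0 := by
    have : ∀ x : Fin n → Bool, unif n x * (h x * chi I x)
        = (1 / 2 ^ n) * (h x * chi I x) := fun x => rfl
    rw [Finset.sum_congr rfl (fun x _ => this x), ← Finset.mul_sum,
      sum_affine_mul_chi hI w b, mul_zero]
  have chi_sq : ∀ x : Fin n → Bool, chi I x ^ 2 = 1 := by
    intro x
    rw [chi, ← Finset.prod_pow]
    apply Finset.prod_eq_one
    intro i _
    cases x i <;> simp [sgn]
  constructor
  · simp only [Elp, ← hh]
    rw [hsum]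
    ring
  · simp only [Elp, ← hh]
    have expand : ∀ x : Fin n → Bool,
        unif n x * ((h x - chi I x) ^ 2 / 2)
        = unif n x * ((h x) ^ 2 / 2) + unif n x * (1/2) - unif n x * (h x * chi I x) := by
      intro x
      have c2 := chi_sq x
      linear_combination (unif n x / 2) * c2
    rw [Finset.sum_congr rfl (fun x _ => expand x)]
    rw [Finset.sum_sub_distrib, Finset.sum_add_distrib, hsum, sub_zero]
    have hmass : ∑ _x : Fin n → Bool, unif n (_x) * (1/2) = 1/2 := by
      simp [unif, Finset.sum_const, Finset.card_univ]
    rw [hmass]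
    have hS1 : 0 ≤ ∑ x : Fin n → Bool, unif n x * ((h x) ^ 2 / 2) := by
      apply Finset.sum_nonneg
      intro x _
      have : (0:ℝ) ≤ unif n x := by unfold unif; positivity
      positivity
    set S1 := ∑ x : Fin n → Bool, unif n x * ((h x) ^ 2 / 2)
    set H := (∑ x : Fin n, w x * sgn (decide (x ∈ I))) + b with hH
    have hpt : (1/2:ℝ) * ((H - 1) ^ 2 / 2) + 1/2 * ((H - -1) ^ 2 / 2) = H ^ 2 / 2 + 1/2 := by
      ring
    rw [hpt]
    nlinarith [mul_nonneg (by linarith : (0:ℝ) ≤ 1 - α) hS1,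
      mul_nonneg hα.le (sq_nonneg H)]
end
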